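/- arXiv:1311.6047 — 3 statements merged into one kernel-verified Lean document; each statement's English description precedes it below -/
import Mathlib

section
/- Let ν be an algebraic discrete valuation dominating a local domain (R, m_R) with [V_ν/m_ν : R/m_R] = c finite. Then there exists b ∈ ℤ such that the length ℓ_R(R/I_n) equals cn + b for all sufficiently large n. -/
/-!
Since the value group is `ℤ`, clearing the denominator of an element of value `1` gives
`p, q ∈ R` of values `m + 1` and `m`, so the value semigroup of `R` contains every integer
`≥ m²`. Clearing the denominators of the `a i` by a common `t ∈ R` then yields, for every large
`n`, some `d ∈ R` of value exactly `n` with all `d * a i ∈ R`. Division by `d` identifies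
`I_n / I_{n+1}` with `V_ν / m_ν`, so the classes of the `d * a i` form a basis over `R / m_R`,
every summand `ℓ_R(I_k / I_{k+1})` with `k` large equals `c`, and the partial sums are
eventually `c n + b`.
-/

open Finset Filter IsLocalRing

theorem AddSubmonoid.mem_of_mul_self_le {S : AddSubmonoid ℕ} {M n : ℕ} (h₀ : M ∈ S)
    (h₁ : M + 1 ∈ S) (hn : M * M ≤ n) : n ∈ S := by
  rcases M.eq_zero_or_pos with rfl | hM
  · simpa using S.nsmul_mem h₁ n
  have hle : n % M ≤ n / M := (n.mod_lt hM).le.trans ((Nat.le_div_iff_mul_le hM).2 hn)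
  have hdecomp : (n / M - n % M) • M + (n % M) • (M + 1) = n := by
    have := Nat.div_add_mod n M
    simp only [smul_eq_mul]
    zify [hle] at this ⊢
    linear_combination this
  exact hdecomp ▸ add_mem (S.nsmul_mem h₀ _) (S.nsmul_mem h₁ _)

theorem exists_sum_range_eq_mul_add_of_forall_le_eq (f : ℕ → ℕ) {c : ℕ} (N : ℕ)
    (hf : ∀ n, N ≤ n → f n = c) :
    ∃ b : ℤ, ∀ n, N ≤ n → ((∑ k ∈ range n, f k : ℕ) : ℤ) = c * n + b := by
  refine ⟨(∑ k ∈ range N, f k : ℕ) - c * N, fun n hn => ?_⟩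
  induction n, hn using Nat.le_induction with
  | base => ring
  | succ n hn ih => rw [sum_range_succ, hf n hn]; push_cast at ih ⊢; linear_combination ih

theorem finrank_quotient_eq_card_of_forall_sub_sum_mem_of_sum_mem
    {R M ι : Type*} [CommRing R] [AddCommGroup M] [Module R M] [Fintype ι]
    {m : Ideal R} [m.IsMaximal] {N : Submodule R M}
    [Module (R ⧸ m) (M ⧸ N)] [IsScalarTower R (R ⧸ m) (M ⧸ N)] (e : ι → M)
    (hspan : ∀ x : M, ∃ r : ι → R, x - ∑ i, r i • e i ∈ N)
    (hind : ∀ r : ι → R, ∑ i, r i • e i ∈ N → ∀ i, r i ∈ m) :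
    Module.finrank (R ⧸ m) (M ⧸ N) = Fintype.card ι := by
  have hmk (r : ι → R) :
      ∑ i, Ideal.Quotient.mk m (r i) • N.mkQ (e i) = N.mkQ (∑ i, r i • e i) := by
    simp only [← Ideal.Quotient.algebraMap_eq, algebraMap_smul, map_sum, map_smul]
  have hli : LinearIndependent (R ⧸ m) (N.mkQ ∘ e) := by
    rw [Fintype.linearIndependent_iff]
    intro a ha i
    obtain ⟨r, rfl⟩ : ∃ r : ι → R, (fun j => Ideal.Quotient.mk m (r j)) = a :=
      ⟨_, funext fun j => (Ideal.Quotient.mk_surjective (a j)).choose_spec⟩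
    rw [Ideal.Quotient.eq_zero_iff_mem]
    refine hind r ?_ i
    rwa [Function.comp_def, hmk, Submodule.mkQ_apply, Submodule.Quotient.mk_eq_zero] at ha
  have hsp : ⊤ ≤ Submodule.span (R ⧸ m) (Set.range (N.mkQ ∘ e)) := by
    rintro y -
    obtain ⟨x, rfl⟩ := N.mkQ_surjective y
    obtain ⟨r, hr⟩ := hspan x
    have hr' : N.mkQ (x - ∑ i, r i • e i) = 0 := (Submodule.Quotient.mk_eq_zero N).2 hr
    rw [← sub_add_cancel x (∑ i, r i • e i), map_add, hr', zero_add, ← hmk]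
    exact Submodule.sum_mem _ fun i _ => Submodule.smul_mem _ _ (Submodule.subset_span ⟨i, rfl⟩)
  rw [Module.finrank_eq_card_basis (Module.Basis.mk hli hsp)]

section Valuation

variable {R K : Type*} [CommRing R] [Field K] [Algebra R K] [IsFractionRing R K]
  {v : K → ℤ}

theorem eventually_exists_valuation_algebraMap_eq [IsDomain R]
    (hv_mul : ∀ x y : K, x ≠ 0 → y ≠ 0 → v (x * y) = v x + v y)
    (hv_surj : ∀ m : ℤ, ∃ x : K, x ≠ 0 ∧ v x = m)
    (hdom : ∀ f : R, f ≠ 0 → 0 ≤ v (algebraMap R K f)) :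
    ∀ᶠ n : ℕ in atTop, ∃ f : R, f ≠ 0 ∧ v (algebraMap R K f) = n := by
  have hmap (f : R) (hf : f ≠ 0) : algebraMap R K f ≠ 0 :=
    (map_ne_zero_iff _ (IsFractionRing.injective R K)).2 hf
  let S : AddSubmonoid ℕ :=
    { carrier := {n | ∃ f : R, f ≠ 0 ∧ v (algebraMap R K f) = n}
      zero_mem' := ⟨1, one_ne_zero, by
        have := hv_mul 1 1 one_ne_zero one_ne_zero
        rw [one_mul] at this
        simp only [map_one, Nat.cast_zero]; omega⟩
      add_mem' := by
        rintro _ _ ⟨f, hf, hfv⟩ ⟨g, hg, hgv⟩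
        refine ⟨f * g, mul_ne_zero hf hg, ?_⟩
        rw [map_mul, hv_mul _ _ (hmap f hf) (hmap g hg), hfv, hgv, Nat.cast_add] }
  -- a uniformizer `p / q` puts `v q` and `v q + 1` into the value semigroup of `R`
  obtain ⟨x, hx0, hx⟩ := hv_surj 1
  obtain ⟨p, q, hq, rfl⟩ := IsFractionRing.div_surjective (A := R) x
  have hq0 : q ≠ 0 := nonZeroDivisors.ne_zero hq
  have hp0 : p ≠ 0 := by rintro rfl; simp at hx0
  have hvp : v (algebraMap R K p) = v (algebraMap R K q) + 1 := by
    have := hv_mul _ _ hx0 (hmap q hq0)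
    rwa [div_mul_cancel₀ _ (hmap q hq0), hx, add_comm] at this
  have hvq : ((v (algebraMap R K q)).toNat : ℤ) = v (algebraMap R K q) :=
    Int.toNat_of_nonneg (hdom q hq0)
  exact eventually_atTop.2 ⟨_, fun n hn => AddSubmonoid.mem_of_mul_self_le (S := S)
    ⟨q, hq0, hvq.symm⟩ ⟨p, hp0, by rw [hvp]; push_cast; rw [hvq]⟩ hn⟩

theorem eventually_exists_valuation_algebraMap_eq_and_isInteger_mul [IsDomain R] {ι : Type*}
    [Finite ι] (hv_mul : ∀ x y : K, x ≠ 0 → y ≠ 0 → v (x * y) = v x + v y)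
    (hv_surj : ∀ m : ℤ, ∃ x : K, x ≠ 0 ∧ v x = m)
    (hdom : ∀ f : R, f ≠ 0 → 0 ≤ v (algebraMap R K f)) (a : ι → K) :
    ∀ᶠ n : ℕ in atTop, ∃ d : R, d ≠ 0 ∧ v (algebraMap R K d) = n ∧
      ∀ i, IsLocalization.IsInteger R (algebraMap R K d * a i) := by
  obtain ⟨M, hM⟩ :=
    eventually_atTop.1 (eventually_exists_valuation_algebraMap_eq hv_mul hv_surj hdom)
  obtain ⟨t, ht⟩ := IsLocalization.exist_integer_multiples_of_finite (nonZeroDivisors R) a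
  have ht0 : (t : R) ≠ 0 := nonZeroDivisors.ne_zero t.2
  obtain ⟨D, hD⟩ := Int.eq_ofNat_of_zero_le (hdom t ht0)
  refine eventually_atTop.2 ⟨M + D, fun n hn => ?_⟩
  obtain ⟨g, hg0, hg⟩ := hM (n - D) (by omega)
  have hmap (f : R) (hf : f ≠ 0) : algebraMap R K f ≠ 0 :=
    (map_ne_zero_iff _ (IsFractionRing.injective R K)).2 hf
  refine ⟨g * t, mul_ne_zero hg0 ht0, ?_, fun i => ?_⟩
  · rw [map_mul, hv_mul _ _ (hmap g hg0) (hmap t ht0), hg, hD]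
    omega
  · obtain ⟨y, hy⟩ := ht i
    refine ⟨g * y, ?_⟩
    rw [map_mul, hy, Algebra.smul_def, map_mul, mul_assoc]

theorem mem_iff_of_algebraMap_eq_mul {I : ℕ → Ideal R}
    (hv_mul : ∀ x y : K, x ≠ 0 → y ≠ 0 → v (x * y) = v x + v y)
    (hI : ∀ (n : ℕ) (f : R), f ∈ I n ↔ f = 0 ∨ (n : ℤ) ≤ v (algebraMap R K f))
    {u : K} {n : ℕ} (hu : u ≠ 0) (hvu : v u = n) (k : ℕ) {f : R} {z : K}
    (hf : algebraMap R K f = u * z) : f ∈ I (n + k) ↔ z = 0 ∨ (k : ℤ) ≤ v z := by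
  have hf0 : f = 0 ↔ z = 0 := by
    rw [← IsFractionRing.to_map_eq_zero_iff (K := K), hf, mul_eq_zero, or_iff_right hu]
  rw [hI, hf0]
  by_cases hz : z = 0
  · simp [hz]
  · rw [hf, hv_mul u z hu hz, hvu, or_iff_right hz, or_iff_right hz]
    push_cast
    omega

theorem finrank_quotient_eq_card_of_valuation_eq [IsLocalRing R] {ι : Type*} [Fintype ι]
    {I : ℕ → Ideal R}
    (hv_mul : ∀ x y : K, x ≠ 0 → y ≠ 0 → v (x * y) = v x + v y)
    (hI : ∀ (n : ℕ) (f : R), f ∈ I n ↔ f = 0 ∨ (n : ℤ) ≤ v (algebraMap R K f))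
    (a : ι → K) (ha : ∀ i, a i ≠ 0 ∧ v (a i) = 0)
    (hspan : ∀ x : K, (x = 0 ∨ 0 ≤ v x) → ∃ c : ι → R,
      x - ∑ i, algebraMap R K (c i) * a i = 0 ∨ 0 < v (x - ∑ i, algebraMap R K (c i) * a i))
    (hind : ∀ c : ι → R, ((∑ i, algebraMap R K (c i) * a i) = 0 ∨
      0 < v (∑ i, algebraMap R K (c i) * a i)) → ∀ i, c i ∈ maximalIdeal R)
    {n : ℕ} {d : R} (hd : d ≠ 0) (hvd : v (algebraMap R K d) = n) {s : ι → R}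
    (hs : ∀ i, algebraMap R K (s i) = algebraMap R K d * a i)
    [Module (R ⧸ maximalIdeal R) (↥(I n) ⧸ Submodule.comap (I n).subtype (I (n + 1)))]
    [IsScalarTower R (R ⧸ maximalIdeal R)
      (↥(I n) ⧸ Submodule.comap (I n).subtype (I (n + 1)))] :
    Module.finrank (R ⧸ maximalIdeal R) (↥(I n) ⧸ Submodule.comap (I n).subtype (I (n + 1))) =
      Fintype.card ι := by
  have hd' : algebraMap R K d ≠ 0 := (IsFractionRing.to_map_eq_zero_iff (K := K)).not.2 hd
  have hmem := mem_iff_of_algebraMap_eq_mul hv_mul hI hd' hvd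
  have hsum (r : ι → R) : algebraMap R K (∑ i, r i * s i) =
      algebraMap R K d * ∑ i, algebraMap R K (r i) * a i := by
    simp only [map_sum, map_mul, hs, mul_sum, mul_left_comm]
  have hlt (z : K) : 0 < v z ↔ ((1 : ℕ) : ℤ) ≤ v z := by push_cast; omega
  let e (i : ι) : I n := ⟨s i, (hmem 0 (hs i)).2 (Or.inr (by simp [(ha i).2]))⟩
  refine finrank_quotient_eq_card_of_forall_sub_sum_mem_of_sum_mem e (fun x => ?_) fun r hr => ?_
  · set y := algebraMap R K x / algebraMap R K d
    have hx : algebraMap R K x = algebraMap R K d * y := (mul_div_cancel₀ _ hd').symm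
    obtain ⟨r, hr⟩ := hspan y (by exact_mod_cast (hmem 0 hx).1 x.2)
    refine ⟨r, (hmem 1 ?_).2 (by rwa [← hlt])⟩
    simp only [map_sub, Submodule.subtype_apply, Submodule.coe_sum, Submodule.coe_smul,
      smul_eq_mul, e]
    rw [hsum, hx, mul_sub]
  · exact hind r (by rw [hlt]; exact (hmem 1 (hsum r)).1 (by simpa [e] using hr))

end Valuation

theorem stmt4 {R : Type} [CommRing R] [IsDomain R] [IsLocalRing R]
    (v : FractionRing R → ℤ)
    -- v is a valuation of the quotient field K = FractionRing R
    (hv_mul : ∀ x y : FractionRing R, x ≠ 0 → y ≠ 0 → v (x * y) = v x + v y)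
    (hv_add : ∀ x y : FractionRing R, x ≠ 0 → y ≠ 0 → x + y ≠ 0 →
      min (v x) (v y) ≤ v (x + y))
    -- the value group is ℤ (ν is discrete)
    (hv_surj : ∀ m : ℤ, ∃ x : FractionRing R, x ≠ 0 ∧ v x = m)
    -- ν dominates (R, m_R): V_ν ⊇ R and m_ν ∩ R = m_R
    (hdom : ∀ f : R, f ≠ 0 → 0 ≤ v (algebraMap R (FractionRing R) f))
    (hmax : ∀ f : R, f ≠ 0 →
      (f ∈ IsLocalRing.maximalIdeal R ↔ 0 < v (algebraMap R (FractionRing R) f)))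
    -- the valuation ideals I_n = {f ∈ R : ν(f) ≥ n}
    (I : ℕ → Ideal R)
    (hI : ∀ (n : ℕ) (f : R), f ∈ I n ↔ f = 0 ∨ (n : ℤ) ≤ v (algebraMap R (FractionRing R) f))
    (c : ℕ)
    -- the residue field extension (V_ν/m_ν : R/m_R) has a basis of c elements:
    -- a family a i of units of V_ν whose residues span V_ν/m_ν over R/m_R ...
    (a : Fin c → FractionRing R)
    (ha : ∀ i, a i ≠ 0 ∧ v (a i) = 0)
    (hspan : ∀ x : FractionRing R, (x = 0 ∨ 0 ≤ v x) → ∃ c : Fin c → R,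
      x - ∑ i, algebraMap R (FractionRing R) (c i) * a i = 0 ∨
      0 < v (x - ∑ i, algebraMap R (FractionRing R) (c i) * a i))
    -- ... and whose residues are linearly independent over R/m_R
    (hind : ∀ c : Fin c → R,
      ((∑ i, algebraMap R (FractionRing R) (c i) * a i) = 0 ∨
        0 < v (∑ i, algebraMap R (FractionRing R) (c i) * a i)) →
      ∀ i, c i ∈ IsLocalRing.maximalIdeal R)
    -- the residue field R/m_R acts on the quotients I_n/I_{n+1}, compatibly with R
    [instMod : ∀ n : ℕ, Module (R ⧸ IsLocalRing.maximalIdeal R)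
      (↥(I n) ⧸ (Submodule.comap (I n).subtype (I (n + 1))))]
    [∀ n : ℕ, IsScalarTower R (R ⧸ IsLocalRing.maximalIdeal R)
      (↥(I n) ⧸ (Submodule.comap (I n).subtype (I (n + 1))))]
    :
    ∃ b : ℤ, ∃ N : ℕ, ∀ n : ℕ, N ≤ n →
      ((∑ k ∈ Finset.range n, Module.finrank (R ⧸ IsLocalRing.maximalIdeal R)
        (↥(I k) ⧸ (Submodule.comap (I k).subtype (I (k + 1)))) : ℕ) : ℤ) = c * n + b := by
  obtain ⟨N, hN⟩ := eventually_atTop.1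
    (eventually_exists_valuation_algebraMap_eq_and_isInteger_mul hv_mul hv_surj hdom a)
  have hdim (n : ℕ) (hn : N ≤ n) : Module.finrank (R ⧸ IsLocalRing.maximalIdeal R)
      (↥(I n) ⧸ (Submodule.comap (I n).subtype (I (n + 1)))) = c := by
    obtain ⟨d, hd, hvd, hint⟩ := hN n hn
    choose s hs using hint
    rw [finrank_quotient_eq_card_of_valuation_eq hv_mul hI a ha hspan hind hd hvd hs,
      Fintype.card_fin]
  obtain ⟨b, hb⟩ := exists_sum_range_eq_mul_add_of_forall_le_eq _ N hdim
  exact ⟨b, N, hb⟩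
end

section
/- With θ ∈ ℝ_{≥0}, the greedy binary digits e_j of θ, and r_i = 2^i − 1 + Σ_{k=2}^{i} e_k 2^{i−k}, one has lim_{i→∞} 2^{i−1}/r_i = 1/(2+θ), and 2^{i−1}/r_i > 1/(2+θ) for every i ≥ 2. -/
/-!
Dividing by `2^(i-1)` turns `r i` into `2 - 2^(1-i) + sᵢ`, where `sᵢ` is the `i`-th greedy partial
sum of `θ`. Since `0 ≤ θ - sᵢ < 2^(1-i)`, this lies in `[2 + θ - 2·2^(1-i), 2 + θ)`, so it tends to `2 + θ`
while staying strictly below it; inverting gives both claims.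
-/

open Filter Topology Finset

lemma cast_two_pow_sub_one_add_sum (e : ℕ → ℕ) (i : ℕ) :
    ((2 ^ i - 1 + ∑ k ∈ Icc 2 i, e k * 2 ^ (i - k) : ℕ) : ℝ) =
      2 ^ ((i : ℤ) - 1) *
        (2 - 2 ^ ((1 : ℤ) - i) + ∑ k ∈ Icc 2 i, (e k : ℝ) * 2 ^ ((1 : ℤ) - k)) := by
  have h2 : (2 : ℝ) ≠ 0 := two_ne_zero
  have hterm : ∀ k ∈ Icc 2 i,
      (e k : ℝ) * 2 ^ (i - k) = 2 ^ ((i : ℤ) - 1) * ((e k : ℝ) * 2 ^ ((1 : ℤ) - k)) := by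
    intro k hk
    rw [← zpow_natCast, Nat.cast_sub (mem_Icc.1 hk).2, mul_left_comm, ← zpow_add₀ h2]
    ring_nf
  push_cast [Nat.one_le_two_pow]
  rw [sum_congr rfl hterm, ← mul_sum, mul_add, mul_sub, ← zpow_add₀ h2, sub_add_sub_cancel,
    sub_self, zpow_zero, ← zpow_natCast,
    show (2 : ℝ) ^ (i : ℤ) = 2 ^ ((i : ℤ) - 1) * 2 by rw [← zpow_add_one₀ h2]; ring_nf]

lemma tendsto_two_zpow_one_sub_nat :
    Tendsto (fun i : ℕ => (2 : ℝ) ^ ((1 : ℤ) - i)) atTop (𝓝 0) := by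
  have h : Tendsto (fun i : ℕ => 2 * (2⁻¹ : ℝ) ^ i) atTop (𝓝 (2 * 0)) :=
    (tendsto_pow_atTop_nhds_zero_of_lt_one (by norm_num) (by norm_num)).const_mul 2
  rw [mul_zero] at h
  refine h.congr fun i => ?_
  rw [zpow_sub₀ two_ne_zero, zpow_one, zpow_natCast, inv_pow, div_eq_mul_inv]

lemma two_zpow_one_sub_le_half {i : ℕ} (hi : 2 ≤ i) : (2 : ℝ) ^ ((1 : ℤ) - i) ≤ 1 / 2 := by
  rw [one_div, ← zpow_neg_one]
  exact zpow_le_zpow_right₀ one_le_two (by omega)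

theorem stmt14_general
    (θ : ℝ) (hθ : 0 ≤ θ) (e : ℕ → ℕ)
    (hrem : ∀ j : ℕ, 2 ≤ j →
      0 ≤ θ - ∑ k ∈ Finset.Icc 2 j, (e k : ℝ) * 2 ^ ((1 : ℤ) - (k : ℤ)) ∧
      θ - ∑ k ∈ Finset.Icc 2 j, (e k : ℝ) * 2 ^ ((1 : ℤ) - (k : ℤ)) < 2 ^ ((1 : ℤ) - (j : ℤ)))
    (r : ℕ → ℕ)
    (hri : ∀ i : ℕ, 1 ≤ i → r i = 2 ^ i - 1 + ∑ k ∈ Finset.Icc 2 i, e k * 2 ^ (i - k)) :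
    Filter.Tendsto (fun i : ℕ => (2 : ℝ) ^ ((i : ℤ) - 1) / (r i : ℝ)) Filter.atTop
      (nhds (1 / (2 + θ))) ∧
    ∀ i : ℕ, 2 ≤ i → 1 / (2 + θ) < (2 : ℝ) ^ ((i : ℤ) - 1) / (r i : ℝ) := by
  set f : ℕ → ℝ := fun i =>
    2 - 2 ^ ((1 : ℤ) - i) + ∑ k ∈ Icc 2 i, (e k : ℝ) * 2 ^ ((1 : ℤ) - k)
  have hratio : ∀ i : ℕ, 1 ≤ i → (2 : ℝ) ^ ((i : ℤ) - 1) / r i = (f i)⁻¹ := fun i hi => by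
    rw [hri i hi, cast_two_pow_sub_one_add_sum, div_mul_cancel_left₀ (by positivity)]
  have hlt : ∀ i : ℕ, 2 ≤ i → f i < 2 + θ := fun i hi => by
    dsimp only [f]
    linarith [(hrem i hi).1, zpow_pos (two_pos : (0 : ℝ) < 2) ((1 : ℤ) - i)]
  have hge : ∀ i : ℕ, 2 ≤ i → 2 + θ - 2 * 2 ^ ((1 : ℤ) - i) ≤ f i := fun i hi => by
    dsimp only [f]
    linarith [(hrem i hi).2]
  have hpos : ∀ i : ℕ, 2 ≤ i → 0 < f i := fun i hi => by
    linarith [hge i hi, two_zpow_one_sub_le_half hi]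
  have hlim : Tendsto f atTop (𝓝 (2 + θ)) := by
    have hlower : Tendsto (fun i : ℕ => 2 + θ - 2 * (2 : ℝ) ^ ((1 : ℤ) - i)) atTop
        (𝓝 (2 + θ)) := by
      simpa using (tendsto_two_zpow_one_sub_nat.const_mul 2).const_sub (2 + θ)
    refine tendsto_of_tendsto_of_tendsto_of_le_of_le' hlower tendsto_const_nhds ?_ ?_ <;>
      filter_upwards [eventually_ge_atTop 2] with i hi
    exacts [hge i hi, (hlt i hi).le]
  refine ⟨?_, fun i hi => ?_⟩
  · rw [one_div]
    refine (hlim.inv₀ (by positivity)).congr' ?_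
    filter_upwards [eventually_ge_atTop 1] with i hi using (hratio i hi).symm
  · rw [hratio i (by omega), one_div]
    exact inv_strictAnti₀ (hpos i hi) (hlt i hi)

theorem stmt14
    (θ : ℝ) (hθ : 0 ≤ θ) (e : ℕ → ℕ)
    -- the digits e_j are the greedy binary expansion digits of θ
    (he2 : e 2 = ⌊2 * θ⌋₊)
    (hej : ∀ j : ℕ, 3 ≤ j → e j ≤ 1)
    (hrem : ∀ j : ℕ, 2 ≤ j →
      0 ≤ θ - ∑ k ∈ Finset.Icc 2 j, (e k : ℝ) * 2 ^ ((1 : ℤ) - (k : ℤ)) ∧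
      θ - ∑ k ∈ Finset.Icc 2 j, (e k : ℝ) * 2 ^ ((1 : ℤ) - (k : ℤ)) < 2 ^ ((1 : ℤ) - (j : ℤ)))
    (r : ℕ → ℕ)
    (hri : ∀ i : ℕ, 1 ≤ i → r i = 2 ^ i - 1 + ∑ k ∈ Finset.Icc 2 i, e k * 2 ^ (i - k)) :
    Filter.Tendsto (fun i : ℕ => (2 : ℝ) ^ ((i : ℤ) - 1) / (r i : ℝ)) Filter.atTop
      (nhds (1 / (2 + θ))) ∧
    ∀ i : ℕ, 2 ≤ i → 1 / (2 + θ) < (2 : ℝ) ^ ((i : ℤ) - 1) / (r i : ℝ) :=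
  stmt14_general θ hθ e hrem r hri
end

section
/- Let θ ∈ ℝ_{≥0}, let e_j be the greedy binary digits of θ (e_2 = ⌊2θ⌋, e_j ∈ {0,1} for j ≥ 3, with remainders R_i ∈ [0, 2^{1−i})), let r_0 = r_1 = 1 and r_{i+1} = 2r_i + 1 + e_{i+1}, and let α(n) count representations n = n_0 + Σ_{k≥1} n_k r_k with n_0 ∈ ℕ, n_k ∈ {0,1} for k ≥ 1. Then α(n) > n/(2+θ) for all n ≥ 0. -/
/-!
Forcing n_k = 0 for k > i, a representation of n amounts to a subset S ⊆ {1, …, i} with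
∑_{j ∈ S} r_j ≤ n, the part n_0 taking up the rest; so α(n) ≥ B_i(n), the number of such subsets.
Since (r_k) is superincreasing, B_i(m) = 2^i as soon as m + 1 ≥ r_{i+1}, and
B_{i+1}(m) = B_i(m) + B_i(m - r_{i+1}) for m ≥ r_{i+1}. Together with
r_{i+1} + 1 = 2^i (2 + σ_{i+1}) ≤ 2^i (2 + θ), where σ_j = ∑_{k=2}^{j} e_k 2^{1-k} is a partial
binary sum of θ, induction on i gives m < (2 + θ) B_i(m) whenever m + 2 ≤ r_{i+1}.
-/

open Finset

def Superincreasing (r : ℕ → ℕ) : Prop :=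
  ∀ i, ∑ j ∈ Icc 1 i, r j < r (i + 1)

namespace Superincreasing

variable {r : ℕ → ℕ}

lemma of_two_mul_lt (h1 : 0 < r 1) (h : ∀ i, 1 ≤ i → 2 * r i < r (i + 1)) :
    Superincreasing r := by
  intro i
  induction i with
  | zero => simpa using h1
  | succ i ih =>
    rw [sum_Icc_succ_top (by omega)]
    have := h (i + 1) (by omega)
    omega

lemma lt_apply_succ (hr : Superincreasing r) (i : ℕ) : i < r (i + 1) := by
  induction i with
  | zero => exact (hr 0).trans_le' (Nat.zero_le _)
  | succ i ih =>
    have := hr (i + 1)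
    rw [sum_Icc_succ_top (by omega)] at this
    omega

lemma le_apply (hr : Superincreasing r) : ∀ k, k ≤ r k
  | 0 => Nat.zero_le _
  | k + 1 => hr.lt_apply_succ k

end Superincreasing

def subsetSumCount (r : ℕ → ℕ) (i m : ℕ) : ℕ :=
  #{S ∈ (Icc 1 i).powerset | ∑ j ∈ S, r j ≤ m}

section subsetSumCount

variable (r : ℕ → ℕ) {i m : ℕ}

lemma subsetSumCount_le_succ : subsetSumCount r i m ≤ subsetSumCount r (i + 1) m :=
  card_le_card <| filter_subset_filter _ <| powerset_mono.mpr <| Icc_subset_Icc_right (by omega)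

lemma subsetSumCount_of_sum_le (h : ∑ j ∈ Icc 1 i, r j ≤ m) : subsetSumCount r i m = 2 ^ i := by
  rw [subsetSumCount,
    filter_true_of_mem fun S hS => (sum_le_sum_of_subset (mem_powerset.mp hS)).trans h,
    card_powerset, Nat.card_Icc, Nat.add_sub_cancel]

lemma subsetSumCount_succ_of_le (h : r (i + 1) ≤ m) :
    subsetSumCount r (i + 1) m = subsetSumCount r i m + subsetSumCount r i (m - r (i + 1)) := by
  have hnot : ∀ S ∈ (Icc 1 i).powerset, i + 1 ∉ S := fun S hS hmem => by
    simpa using mem_powerset.mp hS hmem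
  rw [subsetSumCount, ← insert_Icc_right_eq_Icc_add_one (by omega), powerset_insert, filter_union,
    filter_image, card_union_of_disjoint, card_image_of_injOn]
  · congr 2
    refine filter_congr fun S hS => ?_
    rw [sum_insert (hnot S hS)]
    omega
  · intro S hS T hT hST
    rw [← erase_insert (hnot S (mem_filter.mp hS).1), ← erase_insert (hnot T (mem_filter.mp hT).1),
      hST]
  · refine disjoint_left.mpr fun S hS hS' => ?_
    obtain ⟨T, -, rfl⟩ := mem_image.mp hS'
    exact hnot _ (mem_filter.mp hS).1 (mem_insert_self _ _)

end subsetSumCount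

theorem lt_subsetSumCount_mul {r : ℕ → ℕ} (hr : Superincreasing r) {c : ℝ}
    (hc : ∀ i, (r (i + 1) : ℝ) + 1 ≤ 2 ^ i * c) (i : ℕ) {m : ℕ} (hm : m + 2 ≤ r (i + 1)) :
    (m : ℝ) < subsetSumCount r i m * c := by
  have hc1 : (r 1 : ℝ) + 1 ≤ c := by simpa using hc 0
  have hc0 : 0 < c := by linarith [(r 1).cast_nonneg (α := ℝ)]
  induction i generalizing m with
  | zero =>
    have hm' : (m : ℝ) + 2 ≤ r 1 := by exact_mod_cast hm
    rw [subsetSumCount_of_sum_le r (by simp), pow_zero, Nat.cast_one, one_mul]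
    linarith
  | succ i ih =>
    set R := r (i + 1)
    have hfull : ∀ k, R ≤ k + 1 → subsetSumCount r i k = 2 ^ i := fun k hk =>
      subsetSumCount_of_sum_le r (by have := hr i; omega)
    have hm_lt : (m : ℝ) < 2 ^ (i + 1) * c := by
      have : (m : ℝ) + 2 ≤ r (i + 2) := by exact_mod_cast hm
      linarith [hc (i + 1)]
    rcases lt_or_ge m R with hmR | hRm
    · have hmono : (subsetSumCount r i m : ℝ) * c ≤ subsetSumCount r (i + 1) m * c := by
        gcongr
        exact subsetSumCount_le_succ r
      refine lt_of_lt_of_le ?_ hmono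
      rcases Nat.lt_or_ge (m + 1) R with hm2 | hm1
      · exact ih hm2
      · rw [hfull m hm1]
        push_cast
        have : (m : ℝ) + 1 ≤ R := by exact_mod_cast hmR
        linarith [hc i]
    · rw [subsetSumCount_succ_of_le r hRm, hfull m (by omega)]
      have hm_eq : (m : ℝ) = R + ↑(m - R) := by push_cast [Nat.cast_sub hRm]; ring
      rcases Nat.lt_or_ge (m - R + 1) R with hk2 | hk1
      · have := ih hk2
        push_cast
        linarith [hc i]
      · rw [hfull (m - R) hk1]
        push_cast
        linarith [pow_succ (2 : ℝ) i ▸ hm_lt]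

def representations (r : ℕ → ℕ) (n : ℕ) : Set (ℕ →₀ ℕ) :=
  {g | (∀ k, 1 ≤ k → g k ≤ 1) ∧ g 0 + ∑ k ∈ g.support.erase 0, g k * r k = n}

section representations

variable {r : ℕ → ℕ}

lemma representations_finite (hr : ∀ k, k ≤ r k) (n : ℕ) : (representations r n).Finite := by
  refine (Set.finite_Iic (Finsupp.indicator (range (n + 1)) fun _ _ => n)).subset ?_
  rintro g ⟨-, hg⟩ k
  have hterm : k ≠ 0 → g k * k ≤ n := fun hk0 => by
    by_cases hgk : g k = 0
    · simp [hgk]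
    have : g k * r k ≤ ∑ j ∈ g.support.erase 0, g j * r j :=
      single_le_sum (f := fun j => g j * r j) (fun _ _ => Nat.zero_le _)
        (mem_erase.mpr ⟨hk0, Finsupp.mem_support_iff.mpr hgk⟩)
    have := Nat.mul_le_mul_left (g k) (hr k)
    omega
  rw [Finsupp.indicator_apply]
  split_ifs with hk
  · rcases eq_or_ne k 0 with rfl | hk0
    · omega
    · exact (Nat.le_mul_of_pos_right _ (Nat.pos_of_ne_zero hk0)).trans (hterm hk0)
  · have hkn : n < k := by simpa using hk
    have : g k * k < 1 * k := by linarith [hterm (by omega)]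
    have := Nat.lt_of_mul_lt_mul_right this
    omega

noncomputable def subsetRepresentation (r : ℕ → ℕ) (n : ℕ) (S : Finset ℕ) : ℕ →₀ ℕ :=
  Finsupp.single 0 (n - ∑ j ∈ S, r j) + Finsupp.indicator S fun _ _ => 1

lemma subsetRepresentation_apply_of_ne_zero {n k : ℕ} (S : Finset ℕ) (hk : k ≠ 0) :
    subsetRepresentation r n S k = if k ∈ S then 1 else 0 := by
  simp [subsetRepresentation, Finsupp.indicator_apply, hk.symm]

lemma subsetRepresentation_apply_zero {n : ℕ} {S : Finset ℕ} (h0 : 0 ∉ S) :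
    subsetRepresentation r n S 0 = n - ∑ j ∈ S, r j := by
  simp [subsetRepresentation, Finsupp.indicator_apply, h0]

lemma support_erase_subsetRepresentation {n : ℕ} {S : Finset ℕ} (h0 : 0 ∉ S) :
    (subsetRepresentation r n S).support.erase 0 = S := by
  ext k
  rw [mem_erase, Finsupp.mem_support_iff]
  by_cases hk : k = 0
  · simp [hk, h0]
  · simp [subsetRepresentation_apply_of_ne_zero S hk, hk]

lemma subsetRepresentation_mem {n : ℕ} {S : Finset ℕ} (h0 : 0 ∉ S) (hS : ∑ j ∈ S, r j ≤ n) :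
    subsetRepresentation r n S ∈ representations r n := by
  refine ⟨fun k hk => ?_, ?_⟩
  · rw [subsetRepresentation_apply_of_ne_zero S (by omega)]
    split_ifs <;> omega
  · have hsum : ∑ k ∈ S, subsetRepresentation r n S k * r k = ∑ k ∈ S, r k :=
      sum_congr rfl fun k hk => by
        rw [subsetRepresentation_apply_of_ne_zero S (ne_of_mem_of_not_mem hk h0), if_pos hk,
          one_mul]
    rw [support_erase_subsetRepresentation h0, hsum, subsetRepresentation_apply_zero h0]
    omega

lemma subsetSumCount_le_card_representations (hr : ∀ k, k ≤ r k) (i n : ℕ) :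
    subsetSumCount r i n ≤ Nat.card (representations r n) := by
  have := (representations_finite hr n).to_subtype
  have h0 : ∀ S ∈ (Icc 1 i).powerset, 0 ∉ S := fun S hS h => by
    simpa using mem_powerset.mp hS h
  rw [subsetSumCount, ← Nat.card_eq_finsetCard]
  refine Nat.card_le_card_of_injective
    (fun S => ⟨subsetRepresentation r n S, subsetRepresentation_mem (h0 S (mem_filter.mp S.2).1)
      (mem_filter.mp S.2).2⟩) fun S T hST => Subtype.ext ?_
  have := congrArg (fun g : representations r n => g.1.support.erase 0) hST
  simpa only [support_erase_subsetRepresentation (h0 _ (mem_filter.mp S.2).1),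
    support_erase_subsetRepresentation (h0 _ (mem_filter.mp T.2).1)] using this

end representations

section recurrence

variable {r e : ℕ → ℕ}

lemma cast_apply_succ_add_one_eq (hr1 : r 1 = 1)
    (hrec : ∀ i, 1 ≤ i → r (i + 1) = 2 * r i + 1 + e (i + 1)) (i : ℕ) :
    (r (i + 1) : ℝ) + 1 = 2 ^ i * (2 + ∑ k ∈ Icc 2 (i + 1), (e k : ℝ) * 2 ^ ((1 : ℤ) - k)) := by
  induction i with
  | zero => norm_num [hr1]
  | succ i ih =>
    have hpow : (2 : ℝ) ^ ((1 : ℤ) - ((i + 1 + 1 : ℕ) : ℤ)) = ((2 : ℝ) ^ (i + 1))⁻¹ := by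
      rw [← zpow_natCast, ← zpow_neg]; push_cast; ring_nf
    rw [hrec (i + 1) (by omega), sum_Icc_succ_top (by omega), hpow]
    push_cast
    field_simp
    linear_combination 2 * ih

lemma cast_apply_succ_add_one_le {θ : ℝ} (hr1 : r 1 = 1)
    (hrec : ∀ i, 1 ≤ i → r (i + 1) = 2 * r i + 1 + e (i + 1))
    (hθ : ∀ j, ∑ k ∈ Icc 2 j, (e k : ℝ) * 2 ^ ((1 : ℤ) - k) ≤ θ) (i : ℕ) :
    (r (i + 1) : ℝ) + 1 ≤ 2 ^ i * (2 + θ) := by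
  rw [cast_apply_succ_add_one_eq hr1 hrec i]
  gcongr
  exact hθ _

end recurrence

theorem stmt16_general
    (θ : ℝ) (hθ : 0 ≤ θ) (e : ℕ → ℕ)
    -- the digits e_j are the greedy binary expansion digits of θ
    (hrem : ∀ j : ℕ, 2 ≤ j →
      0 ≤ θ - ∑ k ∈ Finset.Icc 2 j, (e k : ℝ) * 2 ^ ((1 : ℤ) - (k : ℤ)) ∧
      θ - ∑ k ∈ Finset.Icc 2 j, (e k : ℝ) * 2 ^ ((1 : ℤ) - (k : ℤ)) < 2 ^ ((1 : ℤ) - (j : ℤ)))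
    (r : ℕ → ℕ) (hr1 : r 1 = 1)
    (hrec : ∀ i : ℕ, 1 ≤ i → r (i + 1) = 2 * r i + 1 + e (i + 1))
    -- α n counts the representations n = n_0 + Σ_{k≥1} n_k r_k with n_0 ∈ ℕ and
    -- n_k ∈ {0,1} for k ≥ 1 (finitely many nonzero)
    (α : ℕ → ℕ)
    (hα : ∀ n : ℕ, α n = Nat.card {g : ℕ →₀ ℕ //
      (∀ k : ℕ, 1 ≤ k → g k ≤ 1) ∧ g 0 + ∑ k ∈ g.support.erase 0, g k * r k = n})
    :
    ∀ n : ℕ, (n : ℝ) / (2 + θ) < (α n : ℝ) := by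
  have hsuper : Superincreasing r :=
    .of_two_mul_lt (by omega) fun i hi => by rw [hrec i hi]; omega
  have hpartial : ∀ j, ∑ k ∈ Icc 2 j, (e k : ℝ) * 2 ^ ((1 : ℤ) - k) ≤ θ := fun j => by
    rcases le_or_gt 2 j with hj | hj
    · exact sub_nonneg.mp (hrem j hj).1
    · rwa [Icc_eq_empty_of_lt hj, sum_empty]
  intro n
  rw [div_lt_iff₀ (by linarith), hα n]
  calc (n : ℝ) < subsetSumCount r (n + 1) n * (2 + θ) :=
        lt_subsetSumCount_mul hsuper (cast_apply_succ_add_one_le hr1 hrec hpartial) _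
          (hsuper.lt_apply_succ (n + 1))
    _ ≤ Nat.card (representations r n) * (2 + θ) := by
        gcongr
        exact subsetSumCount_le_card_representations hsuper.le_apply _ _

theorem stmt16
    (θ : ℝ) (hθ : 0 ≤ θ) (e : ℕ → ℕ)
    -- the digits e_j are the greedy binary expansion digits of θ
    (he2 : e 2 = ⌊2 * θ⌋₊)
    (hej : ∀ j : ℕ, 3 ≤ j → e j ≤ 1)
    (hrem : ∀ j : ℕ, 2 ≤ j →
      0 ≤ θ - ∑ k ∈ Finset.Icc 2 j, (e k : ℝ) * 2 ^ ((1 : ℤ) - (k : ℤ)) ∧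
      θ - ∑ k ∈ Finset.Icc 2 j, (e k : ℝ) * 2 ^ ((1 : ℤ) - (k : ℤ)) < 2 ^ ((1 : ℤ) - (j : ℤ)))
    (r : ℕ → ℕ) (hr0 : r 0 = 1) (hr1 : r 1 = 1)
    (hrec : ∀ i : ℕ, 1 ≤ i → r (i + 1) = 2 * r i + 1 + e (i + 1))
    -- α n counts the representations n = n_0 + Σ_{k≥1} n_k r_k with n_0 ∈ ℕ and
    -- n_k ∈ {0,1} for k ≥ 1 (finitely many nonzero)
    (α : ℕ → ℕ)
    (hα : ∀ n : ℕ, α n = Nat.card {g : ℕ →₀ ℕ //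
      (∀ k : ℕ, 1 ≤ k → g k ≤ 1) ∧ g 0 + ∑ k ∈ g.support.erase 0, g k * r k = n})
    :
    ∀ n : ℕ, (n : ℝ) / (2 + θ) < (α n : ℝ) :=
  stmt16_general θ hθ e hrem r hr1 hrec α hα
end
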